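/- Let G be a finitely generated group and f: G → Γ an epimorphism with finitely generated kernel K. If a nonzero homomorphism χ: Γ → ℝ satisfies [χ] ∈ Σ¹(Γ), then [χ ∘ f] ∈ Σ¹(G); conversely, if [χ ∘ f] ∈ Σ¹(G) then [χ] ∈ Σ¹(Γ). In particular, if Γ algebraically fibers then G algebraically fibers. -/

import Mathlib

/-- `χ : G → ℝ` is an (additive) character. -/
def IsChar {G : Type*} [Group G] (χ : G → ℝ) : Prop :=
  ∀ a b : G, χ (a * b) = χ a + χ b

/-- `[χ]` lies in the Bieri–Neumann–Strebel invariant `Σ¹(G)`: `χ` is a nonzero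
character and, for every finite generating set `S` of `G`, the full subgraph of the
Cayley graph `Γ(G,S)` on the vertices `{g : 0 ≤ χ g}` is connected. -/
def InSigma1 {G : Type*} [Group G] (χ : G → ℝ) : Prop :=
  IsChar χ ∧ χ ≠ (fun _ => 0) ∧
    ∀ S : Finset G, Subgroup.closure (S : Set G) = ⊤ →
      ∀ x y : G, 0 ≤ χ x → 0 ≤ χ y →
        Relation.ReflTransGen
          (fun a b => 0 ≤ χ a ∧ 0 ≤ χ b ∧ ∃ s ∈ S, b = a * s ∨ a = b * s) x y

/-!
Write `K = ker f` and `c = χ ∘ f`. A path in the nonnegative part of `Γ` lifts to one in `G`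
ending in the right coset of the endpoint, so the forward direction comes down to moving along
`K` inside `{c ≥ 0}`. Every fixed word can be traversed from high enough up, so choosing a
generator `d` with `c d > 0`, a finite generating set `T` of `K` and `m` large, each
`dᵐ t d⁻ᵐ` (`t ∈ T`) is traversed by climbing `m` steps along `d`, spelling `t`, and descending.
As `c` vanishes on `K` these translations form a subgroup; it contains the subgroup generated
by `dᵐ T d⁻ᵐ`, which is `dᵐ K d⁻ᵐ = K`. Conversely, lifting the generators of `Γ` and adding
`T` gives a generating set of `G` whose paths project to paths in `Γ`, the letters of `T`
becoming trivial. Finally `ker (ψ ∘ f)` is an extension of `ker ψ` by `K`, hence finitely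
generated.
-/

open Relation

namespace IsChar

variable {G : Type*} [Group G] {c : G → ℝ}

lemma map_one (hc : IsChar c) : c 1 = 0 := by
  have := hc 1 1
  rw [mul_one] at this
  linarith

lemma map_inv (hc : IsChar c) (a : G) : c a⁻¹ = -c a := by
  have := hc a a⁻¹
  rw [mul_inv_cancel, hc.map_one] at this
  linarith

lemma map_pow (hc : IsChar c) (a : G) (n : ℕ) : c (a ^ n) = n * c a := by
  induction n with
  | zero => simp [hc.map_one]
  | succ n ih => rw [pow_succ, hc, ih]; push_cast; ring

lemma comp {Γ : Type*} [Group Γ] {χ : Γ → ℝ} (hχ : IsChar χ) (f : G →* Γ) : IsChar (χ ∘ f) :=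
  fun a b => (congrArg χ (map_mul f a b)).trans (hχ _ _)

lemma exists_pos_of_closure_eq_top (hc : IsChar c) {S : Set G}
    (hS : Subgroup.closure S = ⊤) (hne : c ≠ fun _ => 0) :
    ∃ d, (d ∈ S ∨ d⁻¹ ∈ S) ∧ 0 < c d := by
  by_contra! hpos
  have hS0 : ∀ s ∈ S, c s = 0 := fun s hs => by
    have h₁ := hpos s (.inl hs)
    have h₂ := hpos s⁻¹ (.inr (by rwa [inv_inv]))
    rw [hc.map_inv] at h₂
    linarith
  refine hne (funext fun g => ?_)
  induction (hS ▸ Subgroup.mem_top g : g ∈ Subgroup.closure S)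
    using Subgroup.closure_induction with
  | mem x hx => exact hS0 x hx
  | one => exact hc.map_one
  | mul x y _ _ hx hy => rw [hc, hx, hy, add_zero]
  | inv x _ hx => rw [hc.map_inv, hx, neg_zero]

end IsChar

section NonnegPart

variable {G : Type*} [Group G] {c : G → ℝ} {S : Finset G}

def NonnegStep (c : G → ℝ) (S : Finset G) (a b : G) : Prop :=
  0 ≤ c a ∧ 0 ≤ c b ∧ ∃ s ∈ S, b = a * s ∨ a = b * s

def NonnegConnected (c : G → ℝ) : Prop :=
  ∀ S : Finset G, Subgroup.closure (S : Set G) = ⊤ →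
    ∀ x y : G, 0 ≤ c x → 0 ≤ c y → ReflTransGen (NonnegStep c S) x y

lemma inSigma1_iff : InSigma1 c ↔ IsChar c ∧ c ≠ (fun _ => 0) ∧ NonnegConnected c :=
  Iff.rfl

instance : Std.Symm (NonnegStep c S) where
  symm _ _ := fun ⟨ha, hb, s, hs, h⟩ => ⟨hb, ha, s, hs, h.symm⟩

lemma nonnegStep_mul {a s : G} (hs : s ∈ S ∨ s⁻¹ ∈ S) (ha : 0 ≤ c a) (has : 0 ≤ c (a * s)) :
    NonnegStep c S a (a * s) := by
  refine ⟨ha, has, ?_⟩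
  rcases hs with hs | hs
  · exact ⟨s, hs, .inl rfl⟩
  · exact ⟨s⁻¹, hs, .inr (by group)⟩

lemma reflTransGen_mul_pow (hc : IsChar c) {d : G} (hd : d ∈ S ∨ d⁻¹ ∈ S) (hcd : 0 ≤ c d)
    {g : G} (hg : 0 ≤ c g) (n : ℕ) : ReflTransGen (NonnegStep c S) g (g * d ^ n) := by
  have hpos : ∀ k : ℕ, 0 ≤ c (g * d ^ k) := fun k => by
    rw [hc, hc.map_pow]
    positivity
  induction n with
  | zero => rw [pow_zero, mul_one]
  | succ n ih =>
    refine ih.tail ?_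
    rw [pow_succ, ← mul_assoc]
    exact nonnegStep_mul hd (hpos n) (by rw [mul_assoc, ← pow_succ]; exact hpos (n + 1))

lemma exists_reflTransGen_mul (hc : IsChar c) (hS : Subgroup.closure (S : Set G) = ⊤) (h : G) :
    ∃ D : ℝ, ∀ g, D ≤ c g → ReflTransGen (NonnegStep c S) g (g * h) := by
  induction (hS ▸ Subgroup.mem_top h : h ∈ Subgroup.closure (S : Set G))
    using Subgroup.closure_induction with
  | mem s hs =>
    refine ⟨max 0 (-c s), fun g hg => .single (nonnegStep_mul (.inl hs) ?_ ?_)⟩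
    · exact le_trans (le_max_left _ _) hg
    · rw [hc]; linarith [le_max_right 0 (-c s)]
  | one => exact ⟨0, fun g _ => by rw [mul_one]⟩
  | mul x y _ _ hx hy =>
    obtain ⟨D₁, hD₁⟩ := hx
    obtain ⟨D₂, hD₂⟩ := hy
    refine ⟨max D₁ (D₂ - c x), fun g hg => ?_⟩
    have hgx : D₂ ≤ c (g * x) := by rw [hc]; linarith [le_max_right D₁ (D₂ - c x)]
    rw [← mul_assoc]
    exact (hD₁ g (le_trans (le_max_left _ _) hg)).trans (hD₂ _ hgx)
  | inv x _ hx =>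
    obtain ⟨D, hD⟩ := hx
    refine ⟨D + c x, fun g hg => symm_of _ ?_⟩
    have := hD (g * x⁻¹) (by rw [hc, hc.map_inv]; linarith)
    rwa [inv_mul_cancel_right] at this

def nonnegTranslations (hc : IsChar c) (S : Finset G) : Subgroup G where
  carrier := {k | c k = 0 ∧ ∀ g, 0 ≤ c g → ReflTransGen (NonnegStep c S) g (g * k)}
  one_mem' := ⟨hc.map_one, fun g _ => by rw [mul_one]⟩
  mul_mem' := by
    rintro a b ⟨ha, hpa⟩ ⟨hb, hpb⟩
    refine ⟨by rw [hc, ha, hb, add_zero], fun g hg => ?_⟩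
    rw [← mul_assoc]
    exact (hpa g hg).trans (hpb _ (by rwa [hc, ha, add_zero]))
  inv_mem' := by
    rintro a ⟨ha, hpa⟩
    refine ⟨by rw [hc.map_inv, ha, neg_zero], fun g hg => symm_of _ ?_⟩
    have := hpa (g * a⁻¹) (by rwa [hc, hc.map_inv, ha, neg_zero, add_zero])
    rwa [inv_mul_cancel_right] at this

/-- The detour `g → g dᵐ → g dᵐ t → g dᵐ t d⁻ᵐ`: climbing `m` levels first leaves enough room
to spell out `t` without leaving the nonnegative part. -/
lemma conj_pow_mem_nonnegTranslations (hc : IsChar c) {d : G} (hd : d ∈ S ∨ d⁻¹ ∈ S)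
    (hcd : 0 ≤ c d) {t : G} (ht : c t = 0) {D : ℝ}
    (hD : ∀ g, D ≤ c g → ReflTransGen (NonnegStep c S) g (g * t)) {m : ℕ} (hm : D ≤ m * c d) :
    d ^ m * t * (d ^ m)⁻¹ ∈ nonnegTranslations hc S := by
  refine ⟨by rw [hc, hc, ht, hc.map_inv]; ring, fun g hg => ?_⟩
  have hup := reflTransGen_mul_pow hc hd hcd hg m
  have hmid := hD (g * d ^ m) (by rw [hc, hc.map_pow]; linarith)
  have hdown := reflTransGen_mul_pow hc hd hcd (g := g * (d ^ m * t * (d ^ m)⁻¹))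
    (by rw [hc, hc, hc, ht, hc.map_inv]; linarith) m
  rw [show g * (d ^ m * t * (d ^ m)⁻¹) * d ^ m = g * d ^ m * t by group] at hdown
  exact (hup.trans hmid).trans (symm_of _ hdown)

lemma le_nonnegTranslations (hc : IsChar c) (hS : Subgroup.closure (S : Set G) = ⊤)
    (hne : c ≠ fun _ => 0) {K : Subgroup G} [K.Normal] (hK : K.FG) (hcK : ∀ k ∈ K, c k = 0) :
    K ≤ nonnegTranslations hc S := by
  obtain ⟨T, rfl⟩ := hK
  obtain ⟨d, hd, hcd⟩ := hc.exists_pos_of_closure_eq_top hS hne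
  choose D hD using exists_reflTransGen_mul hc hS
  obtain ⟨M, hM⟩ := (T.image D).exists_le
  obtain ⟨m, hm⟩ := exists_nat_ge (M / c d)
  have hconj : Subgroup.closure (T : Set G) ≤
      (nonnegTranslations hc S).comap (MulAut.conj (d ^ m)).toMonoidHom := by
    refine Subgroup.closure_le _ |>.mpr fun t ht => ?_
    refine conj_pow_mem_nonnegTranslations hc hd hcd.le (hcK t (Subgroup.subset_closure ht))
      (hD t) ?_
    rw [div_le_iff₀ hcd] at hm
    linarith [hM (D t) (Finset.mem_image_of_mem D ht)]
  intro k hk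
  have := Subgroup.mem_comap.mp (hconj (Subgroup.Normal.conj_mem ‹_› k hk (d ^ m)⁻¹))
  convert this using 1
  rw [MulEquiv.coe_toMonoidHom, MulAut.conj_apply]
  group

end NonnegPart

section Transfer

variable {G Γ : Type*} [Group G] [Group Γ] {χ : Γ → ℝ} {f : G →* Γ}

lemma exists_lift_reflTransGen [DecidableEq Γ] {S : Finset G} {x : G} {b : Γ}
    (h : ReflTransGen (NonnegStep χ (S.image f)) (f x) b) :
    ∃ g, f g = b ∧ ReflTransGen (NonnegStep (χ ∘ f) S) x g := by
  induction h with
  | refl => exact ⟨x, rfl, .refl⟩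
  | @tail a b _ hstep ih =>
    obtain ⟨g, rfl, hg⟩ := ih
    obtain ⟨ha, hb, _, hfs, hab⟩ := hstep
    obtain ⟨s, hs, rfl⟩ := Finset.mem_image.mp hfs
    obtain ⟨u, hu, hgu⟩ : ∃ u, (u ∈ S ∨ u⁻¹ ∈ S) ∧ f (g * u) = b := by
      rcases hab with rfl | hab
      · exact ⟨s, .inl hs, map_mul f g s⟩
      · exact ⟨s⁻¹, .inr (by rwa [inv_inv]), by rw [map_mul, map_inv, hab, mul_inv_cancel_right]⟩
    exact ⟨g * u, hgu, hg.tail (nonnegStep_mul hu ha (by rwa [Function.comp_apply, hgu]))⟩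

lemma reflTransGen_map {S : Finset G} {S' : Finset Γ} (hS : ∀ s ∈ S, f s ∈ S' ∨ f s = 1)
    {a b : G} (h : ReflTransGen (NonnegStep (χ ∘ f) S) a b) :
    ReflTransGen (NonnegStep χ S') (f a) (f b) := by
  refine ReflTransGen.lift' f (fun a b ⟨ha, hb, s, hs, hab⟩ => ?_) _ _ h
  rcases hS s hs with hs' | hs1
  · exact .single ⟨ha, hb, f s, hs', by rcases hab with rfl | rfl <;> simp⟩
  · have hfab : f a = f b := by rcases hab with rfl | rfl <;> simp [hs1]
    show ReflTransGen _ (f a) (f b)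
    rw [hfab]

lemma NonnegConnected.comp (hf : Function.Surjective f) (hker : f.ker.FG) (hχ : IsChar χ)
    (hne : χ ∘ f ≠ fun _ => 0) (h : NonnegConnected χ) : NonnegConnected (χ ∘ f) := by
  classical
  intro S hS x y hx hy
  have hS' : Subgroup.closure (S.image f : Set Γ) = ⊤ := by
    rw [Finset.coe_image, ← MonoidHom.map_closure, hS, ← MonoidHom.range_eq_map,
      MonoidHom.range_eq_top_of_surjective f hf]
  obtain ⟨g, hgy, hxg⟩ := exists_lift_reflTransGen (h _ hS' (f x) (f y) hx hy)
  have hker_le : f.ker ≤ nonnegTranslations (hχ.comp f) S :=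
    le_nonnegTranslations (hχ.comp f) hS hne hker fun k hk => by
      rw [Function.comp_apply, MonoidHom.mem_ker.mp hk, hχ.map_one]
  have hgy' : g⁻¹ * y ∈ f.ker := by
    rw [MonoidHom.mem_ker, map_mul, map_inv, hgy, inv_mul_cancel]
  have hgy'' := (hker_le hgy').2 g (by rwa [Function.comp_apply, hgy])
  rw [mul_inv_cancel_left] at hgy''
  exact hxg.trans hgy''

lemma NonnegConnected.of_comp (hf : Function.Surjective f) (hker : f.ker.FG)
    (h : NonnegConnected (χ ∘ f)) : NonnegConnected χ := by
  classical
  intro S' hS' x y hx hy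
  obtain ⟨T, hT⟩ := hker
  set sec := Function.surjInv hf
  have hsec : ∀ z, f (sec z) = z := Function.surjInv_eq hf
  set S := S'.image sec ∪ T
  have hmap : ∀ s ∈ S, f s ∈ S' ∨ f s = 1 := by
    intro s hs
    rcases Finset.mem_union.mp hs with hs | hs
    · obtain ⟨s', hs', rfl⟩ := Finset.mem_image.mp hs
      exact .inl (by rwa [hsec])
    · exact .inr (MonoidHom.mem_ker.mp (hT ▸ Subgroup.subset_closure hs))
  have hker_le : f.ker ≤ Subgroup.closure (S : Set G) :=
    hT ▸ Subgroup.closure_mono (by simp [S])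
  have hS : Subgroup.closure (S : Set G) = ⊤ := by
    rw [eq_top_iff, ← sup_eq_left.mpr hker_le, ← Subgroup.map_le_map_iff,
      MonoidHom.map_closure]
    exact le_top.trans (hS'.symm ▸ Subgroup.closure_mono fun s hs =>
      ⟨sec s, Finset.mem_union_left _ (Finset.mem_image_of_mem sec hs), hsec s⟩)
  have hxy := reflTransGen_map hmap <| h S hS (sec x) (sec y)
    (by rwa [Function.comp_apply, hsec]) (by rwa [Function.comp_apply, hsec])
  rwa [hsec, hsec] at hxy

lemma Subgroup.FG.comap_of_surjective {N : Subgroup Γ} (hN : N.FG) (hf : Function.Surjective f)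
    (hker : f.ker.FG) : (N.comap f).FG := by
  classical
  obtain ⟨U, rfl⟩ := hN
  set sec := Function.surjInv hf
  have hlift : (Subgroup.closure (U : Set Γ)).comap f =
      Subgroup.closure ((U.image sec : Finset G) : Set G) ⊔ f.ker := by
    refine le_antisymm ?_ (sup_le ?_ (Subgroup.ker_le_comap f _))
    · rw [← Subgroup.map_le_map_iff, Subgroup.map_comap_eq_self_of_surjective hf,
        MonoidHom.map_closure, Finset.coe_image, Set.image_image]
      simp [sec, Function.surjInv_eq hf]
    · rw [Subgroup.closure_le, Finset.coe_image]
      rintro _ ⟨u, hu, rfl⟩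
      rw [SetLike.mem_coe, Subgroup.mem_comap, Function.surjInv_eq hf]
      exact Subgroup.subset_closure hu
  rw [hlift]
  exact Subgroup.FG.sup ⟨_, rfl⟩ hker

end Transfer

theorem stmt18_general {G Γ : Type*} [Group G] [Group Γ]
    (f : G →* Γ) (hf : Function.Surjective f) (hker : f.ker.FG) :
    (∀ χ : Γ → ℝ, IsChar χ → χ ≠ (fun _ => 0) →
      (InSigma1 χ ↔ InSigma1 (χ ∘ f))) ∧
    ((∃ ψ : Γ →* Multiplicative ℤ, Function.Surjective ψ ∧ ψ.ker.FG) →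
      ∃ φ : G →* Multiplicative ℤ, Function.Surjective φ ∧ φ.ker.FG) := by
  refine ⟨fun χ hχ hne => ?_, fun ⟨ψ, hψ, hψker⟩ => ⟨ψ.comp f, hψ.comp hf, ?_⟩⟩
  · have hne' : χ ∘ f ≠ fun _ => 0 := fun h => hne (hf.injective_comp_right h)
    rw [inSigma1_iff, inSigma1_iff]
    exact ⟨fun ⟨_, _, h⟩ => ⟨hχ.comp f, hne', h.comp hf hker hχ hne'⟩,
      fun ⟨_, _, h⟩ => ⟨hχ, hne, h.of_comp hf hker⟩⟩
  · rw [← MonoidHom.comap_ker]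
    exact hψker.comap_of_surjective hf hker

/-- let `f : G → Γ` be an epimorphism of a finitely generated group `G`
with finitely generated kernel. A nonzero character `χ` of `Γ` satisfies
`[χ] ∈ Σ¹(Γ)` iff `[χ ∘ f] ∈ Σ¹(G)`. In particular, if `Γ` algebraically fibers,
then so does `G`. -/
theorem stmt18 {G Γ : Type*} [Group G] [Group Γ] (hG : Group.FG G)
    (f : G →* Γ) (hf : Function.Surjective f) (hker : f.ker.FG) :
    (∀ χ : Γ → ℝ, IsChar χ → χ ≠ (fun _ => 0) →
      (InSigma1 χ ↔ InSigma1 (χ ∘ f))) ∧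
    ((∃ ψ : Γ →* Multiplicative ℤ, Function.Surjective ψ ∧ ψ.ker.FG) →
      ∃ φ : G →* Multiplicative ℤ, Function.Surjective φ ∧ φ.ker.FG) :=
  stmt18_general f hf hker
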